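/- arXiv:2007.02868 — 2 statements merged into one kernel-verified Lean document; each statement's English description precedes it below -/
import Mathlib

section
/- Let A be a graphop on L^∞(Ω,m) with ‖A‖_{p→q} < ∞ for some p,q ∈ [1,∞], and let μ̄, κ̄ be families of finite measures on 𝕋 with mass ≤ b. Then for all t ∈ [0,T], u ∈ 𝕋: ∫_Ω |V[𝒜,μ,x](t,u) − V[𝒜,κ,x](t,u)| dm(x) ≤ 2C·‖A‖_{p→q}·( ∫_Ω d_BL(μ_t^y, κ_t^y)^p dm(y) )^{1/p}. In particular, if ‖A‖_{1→q} < ∞ then the left side is at most 2C·‖A‖_{1→q}·∫_Ω d_BL(μ_t^y, κ_t^y) dm(y). -/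
open MeasureTheory
open scoped ENNReal NNReal

instance : Fact (0 < 2 * Real.pi) := ⟨by positivity⟩

noncomputable abbrev Circle2pi := AddCircle (2 * Real.pi)

/-- The bounded-Lipschitz distance on finite measures on the circle. -/
noncomputable def dBL (μ κ : Measure Circle2pi) : ℝ :=
  ⨆ f : {f : Circle2pi → ℝ // LipschitzWith 1 f ∧ ∀ v, f v ∈ Set.Icc (0:ℝ) 1},
    |(∫ v, f.1 v ∂μ) - ∫ v, f.1 v ∂κ|

/-!
By linearity of the graphop on bounded measurable functions, `V[𝒜,μ,x] − V[𝒜,κ,x] = C · (A g)(x)`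
with `g(y) = ∫ D(· − u) d(μ^y − κ^y)`. Writing `D(· − u)` as the difference of its positive and
negative parts, both 1-Lipschitz with values in `[0, 1]`, gives `|g| ≤ 2 d_BL(μ^y, κ^y)`, hence
`‖A g‖₁ ≤ ‖A g‖_q ≤ ‖A‖_{p→q} ‖g‖_p ≤ 2 ‖A‖_{p→q} ‖d_BL(μ^·, κ^·)‖_p`.

For `p = 1` the `L¹` norm of `y ↦ d_BL(μ^y, κ^y)` must be identified with its integral, which needs
this function to be measurable: integration against a finite measure is continuous on `C(𝕋, ℝ)`,
so the supremum defining `d_BL` may be taken over a countable dense set of test functions.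
-/

open Set

lemma Continuous.integrable_of_compactSpace {X E : Type*} [TopologicalSpace X] [CompactSpace X]
    [MeasurableSpace X] [OpensMeasurableSpace X] [NormedAddCommGroup E] {μ : Measure X}
    [IsFiniteMeasure μ] {f : X → E} (hf : Continuous f) : Integrable f μ :=
  hf.integrable_of_hasCompactSupport (isClosed_tsupport _).isCompact

lemma abs_integral_le_measureReal_univ {X : Type*} [MeasurableSpace X] (μ : Measure X)
    [IsFiniteMeasure μ] {f : X → ℝ} (hf : ∀ x, |f x| ≤ 1) : |∫ x, f x ∂μ| ≤ μ.real univ := by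
  simpa using norm_integral_le_of_norm_le_const (μ := μ) (C := 1)
    (ae_of_all _ fun x => (Real.norm_eq_abs (f x)).trans_le (hf x))

lemma abs_integral_le_of_measure_univ_le_ofReal {X : Type*} [MeasurableSpace X] {μ : Measure X}
    [IsFiniteMeasure μ] {b : ℝ} (hb : 0 ≤ b) (hμb : μ univ ≤ ENNReal.ofReal b) {f : X → ℝ}
    (hf : ∀ x, |f x| ≤ 1) : |∫ x, f x ∂μ| ≤ b :=
  (abs_integral_le_measureReal_univ μ hf).trans (ENNReal.toReal_le_of_le_ofReal hb hμb)

lemma continuous_integral_continuousMap {X : Type*} [TopologicalSpace X] [CompactSpace X]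
    [MeasurableSpace X] [OpensMeasurableSpace X] (μ : Measure X) [IsFiniteMeasure μ] :
    Continuous fun g : C(X, ℝ) => ∫ x, g x ∂μ := by
  refine (LipschitzWith.of_dist_le_mul (K := ⟨μ.real univ, measureReal_nonneg⟩)
    fun g h => ?_).continuous
  rw [Real.dist_eq, ← integral_sub g.continuous.integrable_of_compactSpace
    h.continuous.integrable_of_compactSpace, mul_comm]
  refine norm_integral_le_of_norm_le_const (f := fun x => g x - h x) (ae_of_all _ fun x => ?_)
  simpa [Real.norm_eq_abs, Real.dist_eq] using ContinuousMap.dist_apply_le_dist (f := g) (g := h) x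

lemma measurable_integral_of_measurable {Ω X E : Type*} [MeasurableSpace Ω] [MeasurableSpace X]
    [NormedAddCommGroup E] [NormedSpace ℝ E] [MeasurableSpace E] [BorelSpace E]
    {μ : Ω → Measure X} (hμ : Measurable μ) {f : X → E} (hf : StronglyMeasurable f) :
    Measurable fun y => ∫ x, f x ∂μ y :=
  (hf.integral_kernel (κ := ⟨μ, hμ⟩)).measurable

lemma apply_sub_eq_of_eq_integral {X Ω : Type*} [MeasurableSpace Ω] {ν : X → Measure Ω}
    [∀ x, IsFiniteMeasure (ν x)] {A : (Ω → ℝ) → X → ℝ}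
    (hA : ∀ g : Ω → ℝ, Measurable g → (∃ M, ∀ y, |g y| ≤ M) → ∀ x, A g x = ∫ y, g y ∂(ν x))
    {f g : Ω → ℝ} (hf : Measurable f) (hg : Measurable g) {M N : ℝ} (hfM : ∀ y, |f y| ≤ M)
    (hgN : ∀ y, |g y| ≤ N) : A (f - g) = A f - A g := by
  funext x
  have hfgb : ∀ y, |(f - g) y| ≤ M + N := fun y => (abs_sub _ _).trans (add_le_add (hfM y) (hgN y))
  rw [Pi.sub_apply, hA _ (hf.sub hg) ⟨_, hfgb⟩, hA f hf ⟨M, hfM⟩, hA g hg ⟨N, hgN⟩]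
  exact integral_sub (.of_bound hf.aestronglyMeasurable M (ae_of_all _ hfM))
    (.of_bound hg.aestronglyMeasurable N (ae_of_all _ hgN))

section Lebesgue

variable {Ω : Type*} [MeasurableSpace Ω] {m : Measure Ω}

lemma ofReal_integral_abs_le_eLpNorm [IsProbabilityMeasure m] {q : ℝ≥0∞} (hq : 1 ≤ q)
    {f : Ω → ℝ} (hf : AEStronglyMeasurable f m) :
    ENNReal.ofReal (∫ x, |f x| ∂m) ≤ eLpNorm f q m :=
  calc ENNReal.ofReal (∫ x, |f x| ∂m)
      = ‖∫ x, |f x| ∂m‖ₑ := (Real.enorm_of_nonneg (integral_nonneg fun _ => abs_nonneg _)).symm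
    _ ≤ ∫⁻ x, ‖|f x|‖ₑ ∂m := enorm_integral_le_lintegral_enorm _
    _ = eLpNorm f 1 m := by simp [eLpNorm_one_eq_lintegral_enorm]
    _ ≤ eLpNorm f q m := eLpNorm_le_eLpNorm_of_exponent_le hq hf

lemma ofReal_integral_abs_le_mul_eLpNorm [IsProbabilityMeasure m] {p q : ℝ≥0∞} (hq : 1 ≤ q)
    {K c : ℝ} (hc : 0 ≤ c) {f g h : Ω → ℝ} (hf : AEStronglyMeasurable f m)
    (hfg : eLpNorm f q m ≤ ENNReal.ofReal K * eLpNorm g p m) (hgh : ∀ y, ‖g y‖ ≤ c * ‖h y‖) :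
    ENNReal.ofReal (∫ x, |f x| ∂m) ≤ ENNReal.ofReal (c * K) * eLpNorm h p m :=
  calc ENNReal.ofReal (∫ x, |f x| ∂m)
      ≤ ENNReal.ofReal K * eLpNorm g p m := (ofReal_integral_abs_le_eLpNorm hq hf).trans hfg
    _ ≤ ENNReal.ofReal K * (ENNReal.ofReal c * eLpNorm h p m) := by
      gcongr
      exact eLpNorm_le_mul_eLpNorm_of_ae_le_mul (ae_of_all _ hgh) p
    _ = ENNReal.ofReal (c * K) * eLpNorm h p m := by rw [ENNReal.ofReal_mul hc]; ring

lemma eLpNorm_one_eq_ofReal_integral {f : Ω → ℝ} (hf : Integrable f m) (hf0 : ∀ x, 0 ≤ f x) :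
    eLpNorm f 1 m = ENNReal.ofReal (∫ x, f x ∂m) := by
  rw [eLpNorm_one_eq_lintegral_enorm, ofReal_integral_eq_lintegral_ofReal hf (ae_of_all _ hf0)]
  exact lintegral_congr fun x => Real.enorm_of_nonneg (hf0 x)

lemma le_mul_integral_of_ofReal_le_mul_eLpNorm_one {L c : ℝ} (hc : 0 ≤ c) {f : Ω → ℝ}
    (hf : Integrable f m) (hf0 : ∀ x, 0 ≤ f x)
    (hL : ENNReal.ofReal L ≤ ENNReal.ofReal c * eLpNorm f 1 m) : L ≤ c * ∫ x, f x ∂m := by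
  rw [eLpNorm_one_eq_ofReal_integral hf hf0, ← ENNReal.ofReal_mul hc] at hL
  exact (ENNReal.ofReal_le_ofReal_iff (mul_nonneg hc (integral_nonneg hf0))).1 hL

end Lebesgue

section BoundedLipschitz

lemma dBL_nonneg (μ κ : Measure Circle2pi) : 0 ≤ dBL μ κ :=
  Real.iSup_nonneg fun _ => abs_nonneg _

variable (μ κ : Measure Circle2pi) [IsFiniteMeasure μ] [IsFiniteMeasure κ]

lemma abs_integral_sub_integral_le_measureReal_univ_add {f : Circle2pi → ℝ}
    (hf : ∀ v, f v ∈ Icc (0 : ℝ) 1) :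
    |∫ v, f v ∂μ - ∫ v, f v ∂κ| ≤ μ.real univ + κ.real univ := by
  have hf1 : ∀ v, |f v| ≤ 1 := fun v => abs_le.2 ⟨by linarith [(hf v).1], (hf v).2⟩
  exact (abs_sub _ _).trans (add_le_add (abs_integral_le_measureReal_univ μ hf1)
    (abs_integral_le_measureReal_univ κ hf1))

lemma abs_integral_sub_le_dBL {f : Circle2pi → ℝ} (hf : LipschitzWith 1 f)
    (hf01 : ∀ v, f v ∈ Icc (0 : ℝ) 1) : |∫ v, f v ∂μ - ∫ v, f v ∂κ| ≤ dBL μ κ := by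
  refine le_ciSup (f := fun f : {f : Circle2pi → ℝ // LipschitzWith 1 f ∧ ∀ v, f v ∈ Icc (0 : ℝ) 1}
    => |∫ v, f.1 v ∂μ - ∫ v, f.1 v ∂κ|) ⟨μ.real univ + κ.real univ, ?_⟩ ⟨f, hf, hf01⟩
  rintro _ ⟨g, rfl⟩
  exact abs_integral_sub_integral_le_measureReal_univ_add μ κ g.2.2

lemma dBL_le_measureReal_univ_add : dBL μ κ ≤ μ.real univ + κ.real univ :=
  Real.iSup_le (fun f => abs_integral_sub_integral_le_measureReal_univ_add μ κ f.2.2)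
    (by positivity)

lemma abs_integral_sub_le_two_mul_dBL {E : Circle2pi → ℝ} (hE : LipschitzWith 1 E)
    (hE1 : ∀ v, |E v| ≤ 1) : |∫ v, E v ∂μ - ∫ v, E v ∂κ| ≤ 2 * dBL μ κ := by
  have hpos := abs_integral_sub_le_dBL μ κ (f := fun v => max (E v) 0) (hE.max_const 0)
    fun v => ⟨le_max_right _ _, max_le (abs_le.1 (hE1 v)).2 zero_le_one⟩
  have hneg := abs_integral_sub_le_dBL μ κ (f := fun v => max (-E v) 0) (hE.neg.max_const 0)
    fun v => ⟨le_max_right _ _, max_le (neg_le.1 (abs_le.1 (hE1 v)).1) zero_le_one⟩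
  have hsplit : ∀ (ρ : Measure Circle2pi) [IsFiniteMeasure ρ],
      ∫ v, E v ∂ρ = ∫ v, max (E v) 0 ∂ρ - ∫ v, max (-E v) 0 ∂ρ := by
    intro ρ _
    rw [← integral_sub (g := fun v => max (-E v) 0)
      (hE.continuous.max continuous_const).integrable_of_compactSpace
      (hE.continuous.neg.max continuous_const).integrable_of_compactSpace]
    simp_rw [max_zero_sub_max_neg_zero_eq_self]
  obtain ⟨hpos₁, hpos₂⟩ := abs_le.1 hpos
  obtain ⟨hneg₁, hneg₂⟩ := abs_le.1 hneg
  rw [hsplit μ, hsplit κ, abs_le]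
  constructor <;> linarith

end BoundedLipschitz

lemma measurable_dBL {Ω : Type*} [MeasurableSpace Ω] {μ κ : Ω → Measure Circle2pi}
    [∀ y, IsFiniteMeasure (μ y)] [∀ y, IsFiniteMeasure (κ y)] (hμ : Measurable μ)
    (hκ : Measurable κ) : Measurable fun y => dBL (μ y) (κ y) := by
  let S : Set C(Circle2pi, ℝ) := {g | LipschitzWith 1 g ∧ ∀ v, g v ∈ Icc (0 : ℝ) 1}
  obtain ⟨T, hTc, hTd⟩ := TopologicalSpace.exists_countable_dense S
  have : Countable T := hTc.to_subtype
  have hsup : ∀ y, dBL (μ y) (κ y) = ⨆ g : T, |∫ v, g.1.1 v ∂μ y - ∫ v, g.1.1 v ∂κ y| := by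
    intro y
    have hcont : Continuous fun g : S => |∫ v, g.1 v ∂μ y - ∫ v, g.1 v ∂κ y| :=
      (((continuous_integral_continuousMap (μ y)).sub
        (continuous_integral_continuousMap (κ y))).abs).comp continuous_subtype_val
    rw [hTd.ciSup' hcont, dBL]
    exact (Function.Surjective.iSup_comp (f := fun g : S =>
      (⟨g.1, g.2⟩ : {f : Circle2pi → ℝ // LipschitzWith 1 f ∧ ∀ v, f v ∈ Icc (0 : ℝ) 1}))
      (fun f => ⟨⟨⟨f.1, f.2.1.continuous⟩, f.2⟩, rfl⟩) _).symm
  simp_rw [hsup]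
  exact Measurable.iSup fun g => ((measurable_integral_of_measurable hμ
    g.1.1.continuous.stronglyMeasurable).sub
    (measurable_integral_of_measurable hκ g.1.1.continuous.stronglyMeasurable)).abs

lemma integrable_dBL {Ω : Type*} [MeasurableSpace Ω] (m : Measure Ω) [IsFiniteMeasure m]
    {μ κ : Ω → Measure Circle2pi} [∀ y, IsFiniteMeasure (μ y)] [∀ y, IsFiniteMeasure (κ y)]
    (hμ : Measurable μ) (hκ : Measurable κ) {b : ℝ} (hb : 0 ≤ b)
    (hμb : ∀ y, μ y univ ≤ ENNReal.ofReal b) (hκb : ∀ y, κ y univ ≤ ENNReal.ofReal b) :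
    Integrable (fun y => dBL (μ y) (κ y)) m := by
  refine .of_bound (measurable_dBL hμ hκ).aestronglyMeasurable (b + b) (ae_of_all _ fun y => ?_)
  rw [Real.norm_of_nonneg (dBL_nonneg _ _)]
  exact (dBL_le_measureReal_univ_add _ _).trans (add_le_add
    (ENNReal.toReal_le_of_le_ofReal hb (hμb y)) (ENNReal.toReal_le_of_le_ofReal hb (hκb y)))

theorem estimation_varying_measure_general
    {Ω : Type*} [MeasurableSpace Ω] (m : Measure Ω) [IsProbabilityMeasure m]
    (C b Anorm : ℝ) (hC : 0 < C) (hb : 0 < b) (hAnorm : 0 ≤ Anorm)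
    (p q : ℝ≥0∞) (hq : 1 ≤ q)
    (D : Circle2pi → ℝ) (hD : LipschitzWith 1 D) (hDbd : ∀ v, |D v| ≤ 1)
    (ν : Ω → Measure Ω) [∀ x, IsFiniteMeasure (ν x)]
    (A : (Ω → ℝ) → (Ω → ℝ))
    (hAfib : ∀ g : Ω → ℝ, Measurable g → (∃ M, ∀ y, |g y| ≤ M) →
      ∀ x, A g x = ∫ y, g y ∂(ν x))
    (hAmeas : ∀ g : Ω → ℝ, Measurable g → Measurable (A g))
    -- finiteness of the (p→q) operator norm: `‖Ag‖_q ≤ Anorm ‖g‖_p`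
    (hApq : ∀ g : Ω → ℝ, Measurable g → (∃ M, ∀ y, |g y| ≤ M) →
      eLpNorm (A g) q m ≤ ENNReal.ofReal Anorm * eLpNorm g p m)
    (μ κ : Ω → Measure Circle2pi)
    [∀ y, IsFiniteMeasure (μ y)] [∀ y, IsFiniteMeasure (κ y)]
    (hμb : ∀ y, μ y Set.univ ≤ ENNReal.ofReal b)
    (hκb : ∀ y, κ y Set.univ ≤ ENNReal.ofReal b)
    (hmeasμ : ∀ S : Set Circle2pi, MeasurableSet S → Measurable fun y => μ y S)
    (hmeasκ : ∀ S : Set Circle2pi, MeasurableSet S → Measurable fun y => κ y S)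
    (V : (Ω → Measure Circle2pi) → Ω → Circle2pi → ℝ)
    (hV : ∀ (ρ : Ω → Measure Circle2pi) (x : Ω) (u : Circle2pi),
      V ρ x u = C * A (fun y => ∫ w, D (w - u) ∂(ρ y)) x) :
    ∀ u : Circle2pi,
      (ENNReal.ofReal (∫ x, |V μ x u - V κ x u| ∂m)
          ≤ ENNReal.ofReal (2 * C * Anorm) * eLpNorm (fun y => dBL (μ y) (κ y)) p m) ∧
      (p = 1 →
        ∫ x, |V μ x u - V κ x u| ∂m
          ≤ 2 * C * Anorm * ∫ y, dBL (μ y) (κ y) ∂m) := by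
  intro u
  have hμ : Measurable μ := Measure.measurable_of_measurable_coe μ hmeasμ
  have hκ : Measurable κ := Measure.measurable_of_measurable_coe κ hmeasκ
  have hDu : LipschitzWith 1 fun w : Circle2pi => D (w - u) := by
    simpa [Function.comp_def] using hD.comp (IsometryEquiv.subRight u).isometry.lipschitz
  set Fμ : Ω → ℝ := fun y => ∫ w, D (w - u) ∂μ y
  set Fκ : Ω → ℝ := fun y => ∫ w, D (w - u) ∂κ y
  have hFμ : ∀ y, |Fμ y| ≤ b := fun y =>
    abs_integral_le_of_measure_univ_le_ofReal hb.le (hμb y) fun w => hDbd _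
  have hFκ : ∀ y, |Fκ y| ≤ b := fun y =>
    abs_integral_le_of_measure_univ_le_ofReal hb.le (hκb y) fun w => hDbd _
  have hFμ_meas := measurable_integral_of_measurable hμ hDu.continuous.stronglyMeasurable
  have hFκ_meas := measurable_integral_of_measurable hκ hDu.continuous.stronglyMeasurable
  have hV_sub : ∀ x, V μ x u - V κ x u = C * A (Fμ - Fκ) x := fun x => by
    rw [hV, hV, apply_sub_eq_of_eq_integral hAfib hFμ_meas hFκ_meas hFμ hFκ, Pi.sub_apply, mul_sub]
  have hmain : ENNReal.ofReal (∫ x, |V μ x u - V κ x u| ∂m)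
      ≤ ENNReal.ofReal (2 * C * Anorm) * eLpNorm (fun y => dBL (μ y) (κ y)) p m := by
    simp_rw [hV_sub, abs_mul, abs_of_pos hC, integral_const_mul]
    rw [ENNReal.ofReal_mul hC.le, show 2 * C * Anorm = C * (2 * Anorm) by ring,
      ENNReal.ofReal_mul hC.le, mul_assoc]
    gcongr
    have hF_bdd : ∀ y, |(Fμ - Fκ) y| ≤ b + b := fun y =>
      (abs_sub _ _).trans (add_le_add (hFμ y) (hFκ y))
    refine ofReal_integral_abs_le_mul_eLpNorm hq zero_le_two
      (hAmeas _ (hFμ_meas.sub hFκ_meas)).aestronglyMeasurable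
      (hApq _ (hFμ_meas.sub hFκ_meas) ⟨b + b, hF_bdd⟩) fun y => ?_
    rw [Real.norm_of_nonneg (dBL_nonneg _ _)]
    exact abs_integral_sub_le_two_mul_dBL _ _ hDu fun w => hDbd _
  refine ⟨hmain, fun hp1 => ?_⟩
  subst hp1
  exact le_mul_integral_of_ofReal_le_mul_eLpNorm_one (by positivity)
    (integrable_dBL m hμ hκ hb.le hμb hκb) (fun y => dBL_nonneg _ _) hmain

/-- (Estimation for varying measure.) If the graphop `A` has finite
`(p→q)` operator norm `‖A‖_{p→q} ≤ Anorm`, then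
`∫_Ω |V[𝒜,μ,x](u) − V[𝒜,κ,x](u)| dm(x) ≤ 2C·Anorm·(∫_Ω d_BL(μ^y,κ^y)^p dm(y))^{1/p}`;
in particular for `p = 1` the right-hand side is `2C·Anorm·∫_Ω d_BL(μ^y,κ^y) dm(y)`. -/
theorem estimation_varying_measure
    {Ω : Type*} [MeasurableSpace Ω] (m : Measure Ω) [IsProbabilityMeasure m]
    (C b Anorm : ℝ) (hC : 0 < C) (hb : 0 < b) (hAnorm : 0 ≤ Anorm)
    (p q : ℝ≥0∞) (hp : 1 ≤ p) (hq : 1 ≤ q)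
    (D : Circle2pi → ℝ) (hD : LipschitzWith 1 D) (hDbd : ∀ v, |D v| ≤ 1)
    (ν : Ω → Measure Ω) [∀ x, IsFiniteMeasure (ν x)]
    (A : (Ω → ℝ) → (Ω → ℝ))
    (hAfib : ∀ g : Ω → ℝ, Measurable g → (∃ M, ∀ y, |g y| ≤ M) →
      ∀ x, A g x = ∫ y, g y ∂(ν x))
    (hAmeas : ∀ g : Ω → ℝ, Measurable g → Measurable (A g))
    -- finiteness of the (p→q) operator norm: `‖Ag‖_q ≤ Anorm ‖g‖_p`
    (hApq : ∀ g : Ω → ℝ, Measurable g → (∃ M, ∀ y, |g y| ≤ M) →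
      eLpNorm (A g) q m ≤ ENNReal.ofReal Anorm * eLpNorm g p m)
    (μ κ : Ω → Measure Circle2pi)
    [∀ y, IsFiniteMeasure (μ y)] [∀ y, IsFiniteMeasure (κ y)]
    (hμb : ∀ y, μ y Set.univ ≤ ENNReal.ofReal b)
    (hκb : ∀ y, κ y Set.univ ≤ ENNReal.ofReal b)
    (hmeasμ : ∀ S : Set Circle2pi, MeasurableSet S → Measurable fun y => μ y S)
    (hmeasκ : ∀ S : Set Circle2pi, MeasurableSet S → Measurable fun y => κ y S)
    (V : (Ω → Measure Circle2pi) → Ω → Circle2pi → ℝ)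
    (hV : ∀ (ρ : Ω → Measure Circle2pi) (x : Ω) (u : Circle2pi),
      V ρ x u = C * A (fun y => ∫ w, D (w - u) ∂(ρ y)) x) :
    ∀ u : Circle2pi,
      (ENNReal.ofReal (∫ x, |V μ x u - V κ x u| ∂m)
          ≤ ENNReal.ofReal (2 * C * Anorm) * eLpNorm (fun y => dBL (μ y) (κ y)) p m) ∧
      (p = 1 →
        ∫ x, |V μ x u - V κ x u| ∂m
          ≤ 2 * C * Anorm * ∫ y, dBL (μ y) (κ y) ∂m) :=
  estimation_varying_measure_general m C b Anorm hC hb hAnorm p q hq D hD hDbd ν A hAfib hAmeas hApq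
    μ κ hμb hκb hmeasμ hmeasκ V hV
end

section
/- Let G be a compact abelian group with normalized Haar measure μ_G and let {k_n} be a positive symmetric summability kernel on G. Then for every n, the function W^n(x,z) := ∫_{G×G} k_n(x−y) k_n(z−ẑ) dν(y,ẑ) is symmetric (W^n(x,z) = W^n(z,x)) and nonnegative, where ν is the symmetric measure on G×G representing a graphop A; consequently K_n A K_n, with K_n f := k_n * f, is an integral operator with symmetric nonnegative kernel W^n, i.e. a graphon. -/
open MeasureTheory
open scoped ENNReal NNReal

/-! Nonnegativity is inherited from `k ≥ 0`, symmetry is the swap-invariance of `ν` applied to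
the integrand, and joint measurability is measurability of a parametric integral against the
finite measure `ν`. -/

namespace MeasureTheory

variable {G : Type*} [Sub G] [MeasurableSpace G]

/-- The kernel of `K A K`, where `ν` represents the graphop `A` and `K` is convolution with `k`. -/
noncomputable def regularizedKernel (k : G → ℝ) (ν : Measure (G × G)) (x z : G) : ℝ :=
  ∫ p, k (x - p.1) * k (z - p.2) ∂ν

variable {k : G → ℝ} {ν : Measure (G × G)}

theorem regularizedKernel_nonneg (hk : ∀ x, 0 ≤ k x) (x z : G) :
    0 ≤ regularizedKernel k ν x z :=
  integral_nonneg fun _ => mul_nonneg (hk _) (hk _)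

theorem integral_comp_swap_of_map_swap_eq {α E : Type*} [MeasurableSpace α]
    [NormedAddCommGroup E] [NormedSpace ℝ E] {μ : Measure (α × α)}
    (hμ : μ.map Prod.swap = μ) (f : α × α → E) :
    ∫ p, f p.swap ∂μ = ∫ p, f p ∂μ :=
  (MeasurePreserving.mk measurable_swap hμ).integral_comp MeasurableEquiv.prodComm.measurableEmbedding f

theorem regularizedKernel_comm (hν : ν.map Prod.swap = ν) (x z : G) :
    regularizedKernel k ν x z = regularizedKernel k ν z x := by
  rw [regularizedKernel, ← integral_comp_swap_of_map_swap_eq hν]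
  simp only [regularizedKernel, Prod.fst_swap, Prod.snd_swap, mul_comm]

theorem measurable_uncurry_regularizedKernel [MeasurableSub₂ G] [SFinite ν]
    (hk : Measurable k) : Measurable (Function.uncurry (regularizedKernel k ν)) := by
  have hint : Measurable fun q : (G × G) × (G × G) => k (q.1.1 - q.2.1) * k (q.1.2 - q.2.2) :=
    (hk.comp (measurable_fst.fst.sub measurable_snd.fst)).mul
      (hk.comp (measurable_fst.snd.sub measurable_snd.snd))
  exact hint.stronglyMeasurable.integral_prod_right'.measurable

end MeasureTheory

theorem regularized_kernel_is_graphon_general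
    {G : Type*} [AddCommGroup G] [TopologicalSpace G] [IsTopologicalAddGroup G]
    [SecondCountableTopology G] [MeasurableSpace G] [BorelSpace G]
    (ν : Measure (G × G)) [IsFiniteMeasure ν]
    (hνsym : Measure.map Prod.swap ν = ν)
    (k : G → ℝ) (hkmeas : Measurable k)
    (hkpos : ∀ x, 0 ≤ k x)
    (W : G → G → ℝ)
    (hW : ∀ x z, W x z = ∫ p, k (x - p.1) * k (z - p.2) ∂ν) :
    (∀ x z, 0 ≤ W x z) ∧ (∀ x z, W x z = W z x) ∧
      Measurable (Function.uncurry W) := by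
  obtain rfl : W = regularizedKernel k ν := funext₂ hW
  exact ⟨regularizedKernel_nonneg hkpos, regularizedKernel_comm hνsym,
    measurable_uncurry_regularizedKernel hkmeas⟩

/-- Let `ν` be the symmetric representing measure of a graphop on the
compact abelian group `G`, and `k` a nonnegative symmetric summability-kernel element.
Then `W(x,z) := ∫_{G×G} k(x−y)·k(z−ẑ) dν(y,ẑ)` is a nonnegative, symmetric, measurable
kernel; consequently the regularization `K A K` is an integral operator with kernel `W`,
i.e. a graphon. -/
theorem regularized_kernel_is_graphon
    {G : Type*} [AddCommGroup G] [TopologicalSpace G] [IsTopologicalAddGroup G]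
    [CompactSpace G] [SecondCountableTopology G] [MeasurableSpace G] [BorelSpace G]
    (μG : Measure G) [IsProbabilityMeasure μG]
    (ν : Measure (G × G)) [IsFiniteMeasure ν]
    (hνsym : Measure.map Prod.swap ν = ν)
    (k : G → ℝ) (hkmeas : Measurable k)
    (hkpos : ∀ x, 0 ≤ k x) (hksym : ∀ x, k (-x) = k x)
    (hknorm : ∫ x, k x ∂μG = 1)
    (W : G → G → ℝ)
    (hW : ∀ x z, W x z = ∫ p, k (x - p.1) * k (z - p.2) ∂ν) :
    (∀ x z, 0 ≤ W x z) ∧ (∀ x z, W x z = W z x) ∧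
      Measurable (Function.uncurry W) :=
  regularized_kernel_is_graphon_general ν hνsym k hkmeas hkpos W hW
end
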